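/- Let 𝕜 be a field, A, B, C vector spaces over 𝕜, and v ∈ A ⊗ B ⊗ C. Then the minimal subspace of v relative to the block A ⊗ B is contained in the tensor product of the minimal subspaces of the individual factors: U_{AB}(v) ≤ the image of U_A(v) ⊗ U_B(v) in A ⊗ B under the canonical map induced by the inclusions U_A(v) ↪ A and U_B(v) ↪ B. -/

import Mathlib

open scoped TensorProduct

section
variable (𝕜 : Type*) [Field 𝕜]

/-- The contraction `id_V ⊗ φ : V ⊗ W → V`, sending `x ⊗ y` to `φ(y) • x`. -/
noncomputable def rContract (V W : Type*) [AddCommGroup V] [Module 𝕜 V]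
    [AddCommGroup W] [Module 𝕜 W] (φ : W →ₗ[𝕜] 𝕜) : V ⊗[𝕜] W →ₗ[𝕜] V :=
  (TensorProduct.rid 𝕜 V).toLinearMap ∘ₗ TensorProduct.map LinearMap.id φ

/-- The contraction `ψ ⊗ id_W : V ⊗ W → W`, sending `x ⊗ y` to `ψ(x) • y`. -/
noncomputable def lContract (V W : Type*) [AddCommGroup V] [Module 𝕜 V]
    [AddCommGroup W] [Module 𝕜 W] (ψ : V →ₗ[𝕜] 𝕜) : V ⊗[𝕜] W →ₗ[𝕜] W :=
  (TensorProduct.lid 𝕜 W).toLinearMap ∘ₗ TensorProduct.map ψ LinearMap.id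

/-- The left minimal subspace `U_V(v)` of `v ∈ V ⊗ W`: the span of all contractions
`(id_V ⊗ φ)(v)` with `φ` in the algebraic dual of `W`. -/
noncomputable def leftMin (V W : Type*) [AddCommGroup V] [Module 𝕜 V]
    [AddCommGroup W] [Module 𝕜 W] (v : V ⊗[𝕜] W) : Submodule 𝕜 V :=
  Submodule.span 𝕜 {x | ∃ φ : W →ₗ[𝕜] 𝕜, rContract 𝕜 V W φ v = x}

/-- The right minimal subspace `U_W(v)` of `v ∈ V ⊗ W`: the span of all contractions
`(ψ ⊗ id_W)(v)` with `ψ` in the algebraic dual of `V`. -/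
noncomputable def rightMin (V W : Type*) [AddCommGroup V] [Module 𝕜 V]
    [AddCommGroup W] [Module 𝕜 W] (v : V ⊗[𝕜] W) : Submodule 𝕜 W :=
  Submodule.span 𝕜 {y | ∃ ψ : V →ₗ[𝕜] 𝕜, lContract 𝕜 V W ψ v = y}

end

section
variable (𝕜 A B C : Type*) [Field 𝕜] [AddCommGroup A] [Module 𝕜 A]
  [AddCommGroup B] [Module 𝕜 B] [AddCommGroup C] [Module 𝕜 C]

/-- The minimal subspace `U_{AB}(v) ≤ A ⊗ B` of `v ∈ (A ⊗ B) ⊗ C`. -/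
noncomputable def minAB (v : (A ⊗[𝕜] B) ⊗[𝕜] C) : Submodule 𝕜 (A ⊗[𝕜] B) :=
  leftMin 𝕜 (A ⊗[𝕜] B) C v

/-- The minimal subspace `U_A(v) ≤ A` of `v ∈ (A ⊗ B) ⊗ C`, obtained by contracting
`B ⊗ C` via the associativity isomorphism. -/
noncomputable def minA (v : (A ⊗[𝕜] B) ⊗[𝕜] C) : Submodule 𝕜 A :=
  leftMin 𝕜 A (B ⊗[𝕜] C) (TensorProduct.assoc 𝕜 A B C v)

/-- The minimal subspace `U_B(v) ≤ B` of `v ∈ (A ⊗ B) ⊗ C`, obtained by contracting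
the factors `A` and `C`. -/
noncomputable def minB (v : (A ⊗[𝕜] B) ⊗[𝕜] C) : Submodule 𝕜 B :=
  Submodule.span 𝕜
    {y | ∃ (ψ : A →ₗ[𝕜] 𝕜) (φ : C →ₗ[𝕜] 𝕜),
      lContract 𝕜 A B ψ (rContract 𝕜 (A ⊗[𝕜] B) C φ v) = y}

end

/-! Every tensor `w ∈ V ⊗ W` lies in `U_V(w) ⊗ U_W(w)`. Modulo `U_V(w)` all contractions of `w`
vanish, so by right exactness of `⊗` it comes from `U_V(w) ⊗ W`; symmetrically it comes from
`V ⊗ U_W(w)`, and over a field (where the inclusions have left inverses) these two subspaces meet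
in `U_V(w) ⊗ U_W(w)`. Apply this to the vectors `w = (id ⊗ φ)(v)` spanning `U_{AB}(v)`: contracting
`w` against `ψ` is contracting `v` against `ψ ⊗ φ`, so `U_A(w) ≤ U_A(v)` and `U_B(w) ≤ U_B(v)`. -/

open TensorProduct LinearMap

section Contraction
variable {𝕜 V W : Type*} [Field 𝕜] [AddCommGroup V] [Module 𝕜 V]
  [AddCommGroup W] [Module 𝕜 W]

@[simp] lemma rContract_tmul (φ : W →ₗ[𝕜] 𝕜) (x : V) (y : W) :
    rContract 𝕜 V W φ (x ⊗ₜ y) = φ y • x := by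
  simp [rContract]

@[simp] lemma lContract_tmul (ψ : V →ₗ[𝕜] 𝕜) (x : V) (y : W) :
    lContract 𝕜 V W ψ (x ⊗ₜ y) = ψ x • y := by
  simp [lContract]

lemma rContract_rTensor {V' : Type*} [AddCommGroup V'] [Module 𝕜 V'] (f : V →ₗ[𝕜] V')
    (φ : W →ₗ[𝕜] 𝕜) (x : V ⊗[𝕜] W) :
    rContract 𝕜 V' W φ (f.rTensor W x) = f (rContract 𝕜 V W φ x) := by
  induction x with
  | zero => simp
  | tmul x y => simp
  | add x y hx hy => simp [hx, hy]

lemma lContract_lTensor {W' : Type*} [AddCommGroup W'] [Module 𝕜 W'] (g : W →ₗ[𝕜] W')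
    (ψ : V →ₗ[𝕜] 𝕜) (x : V ⊗[𝕜] W) :
    lContract 𝕜 V W' ψ (g.lTensor V x) = g (lContract 𝕜 V W ψ x) := by
  induction x with
  | zero => simp
  | tmul x y => simp
  | add x y hx hy => simp [hx, hy]

lemma eq_zero_of_forall_rContract_eq_zero {x : V ⊗[𝕜] W}
    (hx : ∀ φ, rContract 𝕜 V W φ x = 0) : x = 0 := by
  classical
  let b := Module.Basis.ofVectorSpace 𝕜 W
  refine (equivFinsuppOfBasisRight b).injective ?_
  ext i
  exact (equivFinsuppOfBasisRight_apply b x i).trans (hx (b.coord i))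

lemma eq_zero_of_forall_lContract_eq_zero {x : V ⊗[𝕜] W}
    (hx : ∀ ψ, lContract 𝕜 V W ψ x = 0) : x = 0 := by
  classical
  let b := Module.Basis.ofVectorSpace 𝕜 V
  refine (equivFinsuppOfBasisLeft b).injective ?_
  ext i
  exact (equivFinsuppOfBasisLeft_apply b x i).trans (hx (b.coord i))

lemma mem_range_rTensor_leftMin (w : V ⊗[𝕜] W) :
    w ∈ range ((leftMin 𝕜 V W w).subtype.rTensor W) := by
  set U := leftMin 𝕜 V W w
  rw [← (rTensor_exact W (exact_subtype_mkQ U) U.mkQ_surjective).linearMap_ker_eq, mem_ker]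
  refine eq_zero_of_forall_rContract_eq_zero fun φ => ?_
  rw [rContract_rTensor, Submodule.mkQ_apply, Submodule.Quotient.mk_eq_zero]
  exact Submodule.subset_span ⟨φ, rfl⟩

lemma mem_range_lTensor_rightMin (w : V ⊗[𝕜] W) :
    w ∈ range ((rightMin 𝕜 V W w).subtype.lTensor V) := by
  set P := rightMin 𝕜 V W w
  rw [← (lTensor_exact V (exact_subtype_mkQ P) P.mkQ_surjective).linearMap_ker_eq, mem_ker]
  refine eq_zero_of_forall_lContract_eq_zero fun ψ => ?_
  rw [lContract_lTensor, Submodule.mkQ_apply, Submodule.Quotient.mk_eq_zero]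
  exact Submodule.subset_span ⟨ψ, rfl⟩

lemma range_rTensor_inf_range_lTensor_le (U : Submodule 𝕜 V) (P : Submodule 𝕜 W) :
    range (U.subtype.rTensor W) ⊓ range (P.subtype.lTensor V) ≤
      range (map U.subtype P.subtype) := by
  obtain ⟨g, hg⟩ := U.subtype.exists_leftInverse_of_injective U.ker_subtype
  obtain ⟨h, hh⟩ := P.subtype.exists_leftInverse_of_injective P.ker_subtype
  rintro w ⟨hwU, hwP⟩
  have hfixU : ∀ w ∈ range (U.subtype.rTensor W), (U.subtype ∘ₗ g).rTensor W w = w := by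
    rintro _ ⟨x, rfl⟩
    rw [← comp_apply, ← rTensor_comp, comp_assoc, hg, comp_id]
  have hfixP : ∀ w ∈ range (P.subtype.lTensor V), (P.subtype ∘ₗ h).lTensor V w = w := by
    rintro _ ⟨y, rfl⟩
    rw [← comp_apply, ← lTensor_comp, comp_assoc, hh, comp_id]
  refine ⟨map g h w, ?_⟩
  rw [map_map, ← rTensor_comp_lTensor, comp_apply, hfixP w hwP, hfixU w hwU]

lemma mem_range_map_leftMin_rightMin (w : V ⊗[𝕜] W) :
    w ∈ range (map (leftMin 𝕜 V W w).subtype (rightMin 𝕜 V W w).subtype) :=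
  range_rTensor_inf_range_lTensor_le _ _
    ⟨mem_range_rTensor_leftMin w, mem_range_lTensor_rightMin w⟩

end Contraction

section
variable {𝕜 A B C : Type*} [Field 𝕜] [AddCommGroup A] [Module 𝕜 A]
  [AddCommGroup B] [Module 𝕜 B] [AddCommGroup C] [Module 𝕜 C]

lemma rContract_assoc (ψ : B →ₗ[𝕜] 𝕜) (φ : C →ₗ[𝕜] 𝕜) (v : (A ⊗[𝕜] B) ⊗[𝕜] C) :
    rContract 𝕜 A (B ⊗[𝕜] C) (TensorProduct.lid 𝕜 𝕜 ∘ₗ map ψ φ)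
        (TensorProduct.assoc 𝕜 A B C v) =
      rContract 𝕜 A B ψ (rContract 𝕜 (A ⊗[𝕜] B) C φ v) := by
  have : rContract 𝕜 A (B ⊗[𝕜] C) (TensorProduct.lid 𝕜 𝕜 ∘ₗ map ψ φ) ∘ₗ
      (TensorProduct.assoc 𝕜 A B C).toLinearMap =
      rContract 𝕜 A B ψ ∘ₗ rContract 𝕜 (A ⊗[𝕜] B) C φ :=
    ext_threefold fun a b c => by simp [smul_smul, mul_comm]
  exact congr($this v)

lemma leftMin_rContract_le_minA (v : (A ⊗[𝕜] B) ⊗[𝕜] C) (φ : C →ₗ[𝕜] 𝕜) :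
    leftMin 𝕜 A B (rContract 𝕜 (A ⊗[𝕜] B) C φ v) ≤ minA 𝕜 A B C v := by
  rw [leftMin, Submodule.span_le]
  rintro _ ⟨ψ, rfl⟩
  exact Submodule.subset_span ⟨_, rContract_assoc ψ φ v⟩

lemma rightMin_rContract_le_minB (v : (A ⊗[𝕜] B) ⊗[𝕜] C) (φ : C →ₗ[𝕜] 𝕜) :
    rightMin 𝕜 A B (rContract 𝕜 (A ⊗[𝕜] B) C φ v) ≤ minB 𝕜 A B C v := by
  rw [rightMin, Submodule.span_le]
  rintro _ ⟨ψ, rfl⟩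
  exact Submodule.subset_span ⟨ψ, φ, rfl⟩

/-- **Nestedness of minimal subspaces.**
For `v ∈ A ⊗ B ⊗ C`, the minimal subspace of the block `A ⊗ B` is contained in the
image of `U_A(v) ⊗ U_B(v)` in `A ⊗ B` under the canonical map induced by inclusions. -/
theorem minAB_le_range_map_minA_minB (v : (A ⊗[𝕜] B) ⊗[𝕜] C) :
    minAB 𝕜 A B C v ≤
      LinearMap.range
        (TensorProduct.map (minA 𝕜 A B C v).subtype (minB 𝕜 A B C v).subtype) := by
  rw [minAB, leftMin, Submodule.span_le]
  rintro _ ⟨φ, rfl⟩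
  exact range_mapIncl_mono (leftMin_rContract_le_minA v φ) (rightMin_rContract_le_minB v φ)
    (mem_range_map_leftMin_rightMin _)

end
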